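/- arXiv:1612.08515 — 3 statements merged into one kernel-verified Lean document; each statement's English description precedes it below -/
import Mathlib

section
/- Let I be a finite index set and 𝓘 ⊆ I × I an irreflexive relation; for i ∈ I set N(i) = {j ∈ I : (j,i) ∈ 𝓘}. For each i ∈ I let (M_i, d_i) be a metric space and let S_i and Ŝ_i be metric systems with state sets X_i ⊆ M_i and X̂_i ⊆ M_i, constant input signal sets 𝒰_i and 𝒰̂_i, disturbance signals taking values in Π_{j∈N(i)} M_j, and transition maps δ_i and δ̂_i; equip the disturbance space Π_{j∈N(i)} M_j with the vector-valued metric e(w,w') = (d_j(w_j, w'_j))_{j∈N(i)}. Assume that for each i ∈ I the systems S_i and Ŝ_i are disturbance bisimilar via a relation R_i ⊆ X_i × X̂_i with parameters (ε_i, ε̃_i) where ε̃_i = (ε_j)_{j∈N(i)}. Fix I' ⊆ I, let 𝓘' = 𝓘 ∩ (I'×I'), let N'(i) denote neighbors of i inside I', let N(I') = {j : ∃ i∈I', (j,i) ∈ 𝓘 \ 𝓘'}, and define the composed system ⟦S_i⟧_{i∈I'}: its states are Π_{i∈I'} X_i with metric d(x,x') = max_{i∈I'} d_i(x_i, x_i'),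 its inputs are tuples (μ_i)_{i∈I'}, its external disturbance signals are tuples ν = (ν_j)_{j∈N(I')} valued in Π_{j∈N(I')} M_j, and (x_i')_{i∈I'} is a successor of (x_i)_{i∈I'} under ((μ_i), ν) iff for each i ∈ I' there exists a coupling signal ν_i^c valued in Π_{j∈N'(i)} M_j with initial value ν_i^c(0) = (x_j)_{j∈N'(i)} such that x_i' ∈ δ_i(x_i, μ_i, ν_i^c × ν_i^e), where ν_i^e is the restriction of ν to the external neighbors of i (and analogously for ⟦Ŝ_i⟧_{i∈I'}). Then the relation R = {((x_i)_{i∈I'}, (x̂_i)_{i∈I'}) : (x_i, x̂_i) ∈ R_i for all i ∈ I'} is a disturbance bisimulation between ⟦S_i⟧_{i∈I'} and ⟦Ŝ_i⟧_{i∈I'} with parameters ε = max_{i∈I'} ε_i and ε̃ = (ε_j)_{j∈N(I')}. -/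
/-- A relation `R` between the states of two metric systems (with states in a common metric
space `S`, input types `U1`, `U2` (inputs are constant signals, identified with their values),
disturbance signals being arbitrary functions `ℝ → W` into a common space `W` carrying a
vector-valued metric `e : W → W → J → ℝ`, and set-valued transition maps `δ1`, `δ2`) is a
**disturbance bisimulation with parameters `(ε, ε̃)`**. -/
def IsDisturbanceBisim {S : Type*} [PseudoMetricSpace S] {U1 U2 W J : Type*}
    (e : W → W → J → ℝ) (εt : J → ℝ)
    (δ1 : S → U1 → (ℝ → W) → Set S) (δ2 : S → U2 → (ℝ → W) → Set S)
    (R : Set (S × S)) (ε : ℝ) : Prop :=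
  ∀ x1 x2, (x1, x2) ∈ R →
    dist x1 x2 ≤ ε ∧
    (∀ μ1 : U1, ∃ μ2 : U2, ∀ ν1 ν2 : ℝ → W,
      (∀ j, e (ν1 0) (ν2 0) j ≤ εt j) →
      ∀ x1' ∈ δ1 x1 μ1 ν1, ∃ x2' ∈ δ2 x2 μ2 ν2, (x1', x2') ∈ R) ∧
    (∀ μ2 : U2, ∃ μ1 : U1, ∀ ν1 ν2 : ℝ → W,
      (∀ j, e (ν1 0) (ν2 0) j ≤ εt j) →
      ∀ x2' ∈ δ2 x2 μ2 ν2, ∃ x1' ∈ δ1 x1 μ1 ν1, (x1', x2') ∈ R)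

/-- The neighbors `N(i) = {j : (j,i) ∈ 𝓘}` of a component `i`, as a subtype. -/
def NbrType {I : Type} (rel : I → I → Prop) (i : I) : Type := {j : I // rel j i}

/-- The disturbance value space `Π_{j ∈ N(i)} M_j` of component `i`. -/
def DistVal {I : Type} (rel : I → I → Prop) (M : I → Type) (i : I) : Type :=
  (j : NbrType rel i) → M j.1

/-- `j` is an external neighbor of the subset `I'`, i.e. `j ∈ N(I')`:
there is `i ∈ I'` with `(j, i) ∈ 𝓘 \ 𝓘'` where `𝓘' = 𝓘 ∩ (I' × I')`. -/
def ExtNbr {I : Type} [DecidableEq I] (rel : I → I → Prop) (I' : Finset I) (j : I) : Prop :=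
  ∃ i ∈ I', rel j i ∧ ¬(j ∈ I' ∧ i ∈ I')

/-- Transition map of the composed system `⟦S_i⟧_{i∈I'}` : `x'` is a successor of `x` under the
input tuple `μ` and the external disturbance signal `ν` iff for each `i ∈ I'` there is a
coupling signal `ν_i^c` (valued in the product of the states of the neighbors of `i` inside
`I'`) whose initial value is the corresponding part of `x`, such that `x' i` is a successor of
`x i` in the component system under `μ i` and the combination of `ν_i^c` with the restriction
of `ν` to the external neighbors of `i`. -/
def composedDelta {I : Type} [DecidableEq I] (rel : I → I → Prop) (M : I → Type)
    (UI : I → Type)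
    (δ : (i : I) → M i → UI i → (ℝ → DistVal rel M i) → Set (M i))
    (I' : Finset I)
    (x : (i : I') → M i.1) (μ : (i : I') → UI i.1)
    (ν : ℝ → (j : {j : I // ExtNbr rel I' j}) → M j.1) :
    Set ((i : I') → M i.1) :=
  {x' | ∀ i : I', ∃ νc : ℝ → ((j : {j : I // rel j i.1 ∧ j ∈ I'}) → M j.1),
    (∀ j : {j : I // rel j i.1 ∧ j ∈ I'}, νc 0 j = x ⟨j.1, j.2.2⟩) ∧
    x' i ∈ δ i.1 (x i) (μ i)
      (fun t (j : NbrType rel i.1) =>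
        if h : j.1 ∈ I' then νc t ⟨j.1, ⟨j.2, h⟩⟩
        else ν t ⟨j.1, ⟨i.1, i.2, j.2, fun hc => h hc.1⟩⟩)}

/-- **Composability of disturbance bisimulations.** If, for each `i` in a finite index set `I`
with irreflexive interconnection relation `𝓘`, the metric systems `S_i` and `Ŝ_i` (with
disturbances valued in `Π_{j∈N(i)} M_j`, carrying the componentwise vector-valued metric) are
disturbance bisimilar via `R_i` with parameters `(ε_i, (ε_j)_{j∈N(i)})`, then for any nonempty
`I' ⊆ I` the componentwise relation `R` is a disturbance bisimulation between the composed
systems `⟦S_i⟧_{i∈I'}` and `⟦Ŝ_i⟧_{i∈I'}` with parameters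
`(max_{i∈I'} ε_i, (ε_j)_{j∈N(I')})`. -/
theorem compositional_disturbance_bisim
    {I : Type} [Fintype I] [DecidableEq I]
    (rel : I → I → Prop) (hirr : ∀ i, ¬rel i i)
    (M : I → Type) [∀ i, MetricSpace (M i)]
    (UI UIh : I → Type)
    (δ : (i : I) → M i → UI i → (ℝ → DistVal rel M i) → Set (M i))
    (δh : (i : I) → M i → UIh i → (ℝ → DistVal rel M i) → Set (M i))
    (R : (i : I) → Set (M i × M i))
    (ε : I → ℝ)
    (hbis : ∀ i : I,
      IsDisturbanceBisim (fun w w' (j : NbrType rel i) => dist (w j) (w' j))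
        (fun j : NbrType rel i => ε j.1) (δ i) (δh i) (R i) (ε i))
    (I' : Finset I) (hne : I'.Nonempty) :
    IsDisturbanceBisim
      (S := (i : I') → M i.1)
      (fun w w' (j : {j : I // ExtNbr rel I' j}) => dist (w j) (w' j))
      (fun j : {j : I // ExtNbr rel I' j} => ε j.1)
      (composedDelta rel M UI δ I')
      (composedDelta rel M UIh δh I')
      {q : ((i : I') → M i.1) × ((i : I') → M i.1) | ∀ i : I', (q.1 i, q.2 i) ∈ R i.1}
      (I'.sup' hne ε) := by

  intro x1 x2 hx
  simp only [Set.mem_setOf_eq] at hx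
  refine ⟨?_, ?_, ?_⟩
  · -- distance bound
    have hnn : 0 ≤ I'.sup' hne ε := by
      obtain ⟨i0, hi0⟩ := hne
      exact le_trans (dist_nonneg.trans ((hbis i0 _ _ (hx ⟨i0, hi0⟩)).1))
        (Finset.le_sup' ε hi0)
    rw [dist_pi_le_iff hnn]
    intro i
    exact le_trans ((hbis i.1 _ _ (hx i)).1) (Finset.le_sup' ε i.2)
  · -- forward direction
    intro μ1
    choose μ2 hμ2 using fun i : I' => ((hbis i.1 _ _ (hx i)).2.1 (μ1 i))
    refine ⟨μ2, ?_⟩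
    intro ν1 ν2 hν x1' hx1'
    simp only [composedDelta, Set.mem_setOf_eq] at hx1' ⊢
    choose νc hνc0 hmem using hx1'
    have key : ∀ i : I', ∃ y ∈ δh i.1 (x2 i) (μ2 i)
        (fun t (j : NbrType rel i.1) =>
          if h : j.1 ∈ I' then x2 ⟨j.1, h⟩
          else ν2 t ⟨j.1, ⟨i.1, i.2, j.2, fun hc => h hc.1⟩⟩),
        (x1' i, y) ∈ R i.1 := by
      intro i
      refine hμ2 i _ _ ?_ (x1' i) (hmem i)
      intro j
      by_cases h : j.1 ∈ I'
      · simp only [h, dif_pos, hνc0 i ⟨j.1, ⟨j.2, h⟩⟩]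
        exact (hbis j.1 _ _ (hx ⟨j.1, h⟩)).1
      · simp only [h, dif_neg, not_false_iff]
        exact hν ⟨j.1, ⟨i.1, i.2, j.2, fun hc => h hc.1⟩⟩
    choose x2' hx2'mem hx2'R using key
    refine ⟨x2', fun i => ⟨fun _ j => x2 ⟨j.1, j.2.2⟩, fun j => rfl, hx2'mem i⟩, hx2'R⟩
  · -- backward direction
    intro μ2
    choose μ1 hμ1 using fun i : I' => ((hbis i.1 _ _ (hx i)).2.2 (μ2 i))
    refine ⟨μ1, ?_⟩
    intro ν1 ν2 hν x2' hx2'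
    simp only [composedDelta, Set.mem_setOf_eq] at hx2' ⊢
    choose νc hνc0 hmem using hx2'
    have key : ∀ i : I', ∃ y ∈ δ i.1 (x1 i) (μ1 i)
        (fun t (j : NbrType rel i.1) =>
          if h : j.1 ∈ I' then x1 ⟨j.1, h⟩
          else ν1 t ⟨j.1, ⟨i.1, i.2, j.2, fun hc => h hc.1⟩⟩),
        (y, x2' i) ∈ R i.1 := by
      intro i
      refine hμ1 i _ _ ?_ (x2' i) (hmem i)
      intro j
      by_cases h : j.1 ∈ I'
      · simp only [h, dif_pos, hνc0 i ⟨j.1, ⟨j.2, h⟩⟩]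
        exact (hbis j.1 _ _ (hx ⟨j.1, h⟩)).1
      · simp only [h, dif_neg, not_false_iff]
        exact hν ⟨j.1, ⟨i.1, i.2, j.2, fun hc => h hc.1⟩⟩
    choose x1' hx1'mem hx1'R using key
    refine ⟨x1', fun i => ⟨fun _ j => x1 ⟨j.1, j.2.2⟩, fun j => rfl, hx1'mem i⟩, hx1'R⟩
end

section
/- Let N ≥ 1, let I = {1, …, N} with a neighbor map N(·) assigning to each i ∈ I a finite set N(i) ⊆ I with i ∉ N(i), and write n_i = |N(i)|. Suppose for each i there are K∞ functions α_i, σ_{d,i}, θ_i and constants λ_i > 0, c_{i,α} > 0, c_{i,σ} > 0 such that for all r ≥ 0: (1) α_i( r / max(1, n_i) ) ≥ c_{i,α}·θ_i(r), and (2) if N(i) ≠ ∅ then σ_{d,i}(r) ≤ c_{i,σ}·θ_i(r). Let A ∈ ℝ^{N×N} be the diagonal matrix with A(i,i) = λ_i·c_{i,α}, and let B ∈ ℝ^{N×N} have B(i,j) = c_{j,σ} if j ∈ N(i) and B(i,j) = 0 otherwise. If there exists s ∈ ℝ^N with s_i > 0 for all i and (−A + B)s < 0 componentwise, then there exist ε'_1,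 …, ε'_N > 0 such that for every i ∈ I, λ_i · α_i( ε'_i / max(1, n_i) ) > Σ_{j∈N(i)} σ_{d,j}(ε'_j). -/
/-!
Reading `(-A + B) s < 0` row by row gives `∑_{j ∈ N(i)} c_{j,σ} s_j < λ_i c_{i,α} s_i`. Choose
`ε'_j > 0` with `θ_j(ε'_j) = s_j` when `N(j) ≠ ∅`, and with `σ_{d,j}(ε'_j) = c_{j,σ} s_j`
otherwise (both are possible because `K∞` functions map `(0, ∞)` onto `(0, ∞)`). Then
`σ_{d,j}(ε'_j) ≤ c_{j,σ} s_j` for every `j`, while `λ_i α_i(ε'_i / max(1, n_i)) ≥ λ_i c_{i,α} s_i`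
whenever `N(i) ≠ ∅`; when `N(i) = ∅` the sum is empty and the right-hand side is positive.
-/

/-- A continuous function `ℝ_{≥0} → ℝ_{≥0}` of class `K∞`: strictly increasing, vanishing at `0`,
and tending to `∞` at `∞` (modeled on the nonnegative half-line of `ℝ`). -/
def IsKInf (g : ℝ → ℝ) : Prop :=
  ContinuousOn g (Set.Ici 0) ∧ StrictMonoOn g (Set.Ici 0) ∧ g 0 = 0 ∧
    Filter.Tendsto g Filter.atTop Filter.atTop

open Set Matrix

namespace IsKInf

variable {g : ℝ → ℝ}

theorem image_Ioi (hg : IsKInf g) : g '' Ioi 0 = Ioi 0 := by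
  obtain ⟨hcont, hmono, hzero, htop⟩ := hg
  simpa [hzero] using hcont.image_Ioi_of_strictMonoOn hmono htop

theorem pos (hg : IsKInf g) {x : ℝ} (hx : 0 < x) : 0 < g x := by
  have : g x ∈ g '' Ioi 0 := mem_image_of_mem g hx
  rwa [hg.image_Ioi] at this

theorem exists_pos_eq (hg : IsKInf g) {y : ℝ} (hy : 0 < y) : ∃ x, 0 < x ∧ g x = y := by
  have : y ∈ g '' Ioi 0 := by rwa [hg.image_Ioi]
  exact this

end IsKInf

namespace Matrix

variable {ι R : Type*} [Fintype ι] [DecidableEq ι]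

theorem of_ite_mem_mulVec_apply [NonUnitalNonAssocSemiring R] (Nbr : ι → Finset ι)
    (c s : ι → R) (i : ι) :
    ((of fun i j => if j ∈ Nbr i then c j else 0) *ᵥ s) i = ∑ j ∈ Nbr i, c j * s j := by
  simp [mulVec, dotProduct, ite_mul, Finset.sum_ite_mem]

theorem sum_mul_lt_of_neg_diagonal_add_of_ite_mem_mulVec_neg [Ring R] [PartialOrder R]
    [IsOrderedAddMonoid R] (Nbr : ι → Finset ι) (d c s : ι → R) (i : ι)
    (h : ((-diagonal d + of fun i j => if j ∈ Nbr i then c j else 0) *ᵥ s) i < 0) :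
    ∑ j ∈ Nbr i, c j * s j < d i * s i := by
  rwa [add_mulVec, neg_mulVec, Pi.add_apply, Pi.neg_apply, mulVec_diagonal,
    of_ite_mem_mulVec_apply, neg_add_lt_iff_lt_add, add_zero] at h

end Matrix

theorem exists_pos_apply_le_mul_and_eq {σ θ : ℝ → ℝ} (hσ : IsKInf σ) (hθ : IsKInf θ)
    {c s : ℝ} (hc : 0 < c) (hs : 0 < s) {P : Prop} (hσθ : P → ∀ r, 0 ≤ r → σ r ≤ c * θ r) :
    ∃ ε, 0 < ε ∧ σ ε ≤ c * s ∧ (P → θ ε = s) := by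
  by_cases hP : P
  · obtain ⟨ε, hε, hθε⟩ := hθ.exists_pos_eq hs
    exact ⟨ε, hε, hθε ▸ hσθ hP ε hε.le, fun _ => hθε⟩
  · obtain ⟨ε, hε, hσε⟩ := hσ.exists_pos_eq (mul_pos hc hs)
    exact ⟨ε, hε, hσε.le, fun h => absurd h hP⟩

theorem small_gain_quantization_exists_general (N : ℕ)
    (Nbr : Fin N → Finset (Fin N))
    (alpha sigd theta : Fin N → ℝ → ℝ)
    (halpha : ∀ i, IsKInf (alpha i)) (hsigd : ∀ i, IsKInf (sigd i))
    (htheta : ∀ i, IsKInf (theta i))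
    (lam calpha csig : Fin N → ℝ)
    (hlam : ∀ i, 0 < lam i) (hcsig : ∀ i, 0 < csig i)
    (h1 : ∀ i, ∀ r : ℝ, 0 ≤ r →
      calpha i * theta i r ≤ alpha i (r / max 1 ((Nbr i).card : ℝ)))
    (h2 : ∀ i, (Nbr i).Nonempty → ∀ r : ℝ, 0 ≤ r → sigd i r ≤ csig i * theta i r)
    (s : Fin N → ℝ) (hs : ∀ i, 0 < s i)
    (hsg : ∀ i, ((-(Matrix.diagonal fun i => lam i * calpha i) +
        Matrix.of fun i j => if j ∈ Nbr i then csig j else 0).mulVec s) i < 0) :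
    ∃ ε' : Fin N → ℝ, (∀ i, 0 < ε' i) ∧
      ∀ i, (∑ j ∈ Nbr i, sigd j (ε' j)) <
        lam i * alpha i (ε' i / max 1 ((Nbr i).card : ℝ)) := by
  choose ε hε hσε hθε using fun j =>
    exists_pos_apply_le_mul_and_eq (hsigd j) (htheta j) (hcsig j) (hs j) (h2 j)
  refine ⟨ε, hε, fun i => ?_⟩
  rcases (Nbr i).eq_empty_or_nonempty with hi | hi
  · simpa [hi] using mul_pos (hlam i) ((halpha i).pos (hε i))
  have hrow := sum_mul_lt_of_neg_diagonal_add_of_ite_mem_mulVec_neg Nbr _ csig s i (hsg i)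
  calc ∑ j ∈ Nbr i, sigd j (ε j)
      ≤ ∑ j ∈ Nbr i, csig j * s j := Finset.sum_le_sum fun j _ => hσε j
    _ < lam i * (calpha i * s i) := by rwa [← mul_assoc]
    _ ≤ lam i * alpha i (ε i / max 1 ((Nbr i).card : ℝ)) :=
      mul_le_mul_of_nonneg_left (by simpa [hθε i hi] using h1 i (ε i) (hε i).le) (hlam i).le

/-- **Small-gain condition for simultaneous abstraction.** Under the comparison conditions
`α_i(r/max(1,n_i)) ≥ c_{i,α}·θ_i(r)` and (for components with neighbors)
`σ_{d,i}(r) ≤ c_{i,σ}·θ_i(r)`, if there exists a positive vector `s` with `(−A + B)s < 0`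
componentwise — where `A = diag(λ_i·c_{i,α})` and `B(i,j) = c_{j,σ}` if `j ∈ N(i)`, else `0` —
then there exist `ε'_i > 0` with
`λ_i·α_i(ε'_i/max(1,n_i)) > Σ_{j∈N(i)} σ_{d,j}(ε'_j)` for every `i`. -/
theorem small_gain_quantization_exists (N : ℕ) (hN : 1 ≤ N)
    (Nbr : Fin N → Finset (Fin N)) (hirr : ∀ i, i ∉ Nbr i)
    (alpha sigd theta : Fin N → ℝ → ℝ)
    (halpha : ∀ i, IsKInf (alpha i)) (hsigd : ∀ i, IsKInf (sigd i))
    (htheta : ∀ i, IsKInf (theta i))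
    (lam calpha csig : Fin N → ℝ)
    (hlam : ∀ i, 0 < lam i) (hcalpha : ∀ i, 0 < calpha i) (hcsig : ∀ i, 0 < csig i)
    (h1 : ∀ i, ∀ r : ℝ, 0 ≤ r →
      calpha i * theta i r ≤ alpha i (r / max 1 ((Nbr i).card : ℝ)))
    (h2 : ∀ i, (Nbr i).Nonempty → ∀ r : ℝ, 0 ≤ r → sigd i r ≤ csig i * theta i r)
    (s : Fin N → ℝ) (hs : ∀ i, 0 < s i)
    (hsg : ∀ i, ((-(Matrix.diagonal fun i => lam i * calpha i) +
        Matrix.of fun i j => if j ∈ Nbr i then csig j else 0).mulVec s) i < 0) :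
    ∃ ε' : Fin N → ℝ, (∀ i, 0 < ε' i) ∧
      ∀ i, (∑ j ∈ Nbr i, sigd j (ε' j)) <
        lam i * alpha i (ε' i / max 1 ((Nbr i).card : ℝ)) :=
  small_gain_quantization_exists_general N Nbr alpha sigd theta halpha hsigd htheta lam calpha csig
    hlam hcsig h1 h2 s hs hsg
end

section
/- Let τ > 0, χ ≥ 0, let Ξ denote a set of differentiable curves ξ : ℝ_{≥0} → ℝⁿ, and let Ξ_τ denote a set of sequences ℕ → ℝⁿ. For ξ_τ ∈ Ξ_τ define [ξ_τ]_χ = { ξ ∈ Ξ : for all t ≥ 0, with k = ⌊ t/τ + 1/2 ⌋, ‖ξ(t) − ξ_τ(k)‖ ≤ χ·|t − k·τ| }, and for a specification φ ⊆ Ξ define φ_τ = { ξ_τ ∈ Ξ_τ : [ξ_τ]_χ ⊆ φ }. Suppose ξ ∈ Ξ is differentiable with ‖ξ'(t)‖ ≤ χ for all t ≥ 0, and suppose ξ_τ ∈ φ_τ satisfies ξ(k·τ) = ξ_τ(k) for all k ∈ ℕ. Then ξ ∈ φ. -/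
/-- **Soundness of controller refinement in continuous time.** With the `χ`-envelope
`[ξ_τ]_χ = { ξ ∈ Ξ : ∀ t ≥ 0, ‖ξ(t) − ξ_τ(⌊t/τ+1/2⌋)‖ ≤ χ·|t − ⌊t/τ+1/2⌋·τ| }` and the sampled
specification `φ_τ = { ξ_τ : [ξ_τ]_χ ⊆ φ }`, any differentiable curve `ξ ∈ Ξ` with
`‖ξ'(t)‖ ≤ χ` whose `τ`-samples form a sequence `ξ_τ ∈ φ_τ` satisfies `ξ ∈ φ`. -/
theorem refinement_soundness_continuous (n : ℕ) (τ χ : ℝ) (hτ : 0 < τ) (hχ : 0 ≤ χ)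
    (Ξ : Set (ℝ → Fin n → ℝ)) (Ξτ : Set (ℕ → Fin n → ℝ))
    (φ : Set (ℝ → Fin n → ℝ)) (hφ : φ ⊆ Ξ)
    (ξ : ℝ → Fin n → ℝ) (hξΞ : ξ ∈ Ξ)
    (dξ : ℝ → Fin n → ℝ)
    (hder : ∀ t, 0 ≤ t → HasDerivWithinAt ξ (dξ t) (Set.Ici 0) t)
    (hbd : ∀ t, 0 ≤ t → ‖dξ t‖ ≤ χ)
    (ξτ : ℕ → Fin n → ℝ)
    (hsample : ∀ k : ℕ, ξ (k * τ) = ξτ k)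
    (hmem : ξτ ∈ {s : ℕ → Fin n → ℝ | s ∈ Ξτ ∧
      {ξ' | ξ' ∈ Ξ ∧ ∀ t : ℝ, 0 ≤ t →
        ‖ξ' t - s (⌊t / τ + 1/2⌋).toNat‖ ≤ χ * |t - (⌊t / τ + 1/2⌋ : ℤ) * τ|} ⊆ φ}) :
    ξ ∈ φ := by
  apply hmem.2
  refine ⟨hξΞ, fun t ht => ?_⟩
  set k : ℤ := ⌊t / τ + 1/2⌋ with hk
  have hk0 : 0 ≤ k := by
    apply Int.le_floor.2
    push_cast
    positivity
  have hcast : ((k.toNat : ℕ) : ℝ) = (k : ℝ) := by exact_mod_cast Int.toNat_of_nonneg hk0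
  have hkt : ξτ k.toNat = ξ ((k : ℝ) * τ) := by
    rw [← hsample k.toNat, hcast]
  rw [hkt]
  have hkτ : 0 ≤ (k : ℝ) * τ := by
    have : (0:ℝ) ≤ (k:ℝ) := by exact_mod_cast hk0
    positivity
  have := (convex_Ici (0:ℝ)).norm_image_sub_le_of_norm_hasDerivWithin_le
    (fun x hx => hder x hx) (fun x hx => hbd x hx) hkτ ht
  simpa [Real.norm_eq_abs] using this
end
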